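/- Let Δ₀ be a BV Laplacian on the graded commutative algebra X with associated BV bracket (−,−)₀, let a ∈ X be a degree-0 element with Δ₀a + (1/2)(a,a)₀ = 0, let α : X → X be an invertible degree-preserving morphism of unital graded algebras, and set Δ_{αa} = α∘(Δ₀ + (a,−)₀)∘α⁻¹. Then the BV bracket (−,−)_{αa} associated with the BV Laplacian Δ_{αa} satisfies (f,g)_{αa} = α((α⁻¹f, α⁻¹g)₀) for all f, g ∈ X; in particular the BV bracket associated with Δ₀ + (a,−)₀ equals (−,−)₀. -/

import Mathlib

/-!
Common setup: real unital ℤ-graded (graded-)commutative algebras, BV Laplacians,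
BV brackets, BV algebra structures, canonical maps and master actions.
-/

/-- Graded commutativity with Koszul signs: `f * g = (-1)^{|f||g|} g * f`
for homogeneous `f`, `g`. -/
def GradedComm {X : Type*} [Ring X] [Algebra ℝ X] (𝒜 : ℤ → Submodule ℝ X) : Prop :=
  ∀ (i j : ℤ) (f g : X), f ∈ 𝒜 i → g ∈ 𝒜 j → f * g = ((-1 : ℝ) ^ (i * j)) • (g * f)

/-- `D` is a BV Laplacian on the ℤ-graded algebra `X` with grading `𝒜`:
it raises degree by `1`, is a second-order differential operator
(seven-term identity on homogeneous elements), squares to zero and kills `1`. -/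
def IsBVLaplacian {X : Type*} [Ring X] [Algebra ℝ X]
    (𝒜 : ℤ → Submodule ℝ X) (D : X →ₗ[ℝ] X) : Prop :=
  (∀ (i : ℤ) (f : X), f ∈ 𝒜 i → D f ∈ 𝒜 (i + 1)) ∧
  (∀ (i j k : ℤ) (f g h : X), f ∈ 𝒜 i → g ∈ 𝒜 j → h ∈ 𝒜 k →
    D (f * g * h) =
      -(D f * g * h) - ((-1 : ℝ) ^ i) • (f * D g * h)
        - ((-1 : ℝ) ^ (i + j)) • (f * g * D h)
        + D (f * g) * h + ((-1 : ℝ) ^ ((i + 1) * j)) • (g * D (f * h))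
        + ((-1 : ℝ) ^ i) • (f * D (g * h))) ∧
  (∀ f : X, D (D f) = 0) ∧
  D 1 = 0

/-- `Br` is the BV bracket associated with the Laplacian `D`: it is the bilinear
map given on homogeneous `f`, `g` by
`(f,g) = (-1)^{|f|} (D(fg) - (Df)g - (-1)^{|f|} f(Dg))`. -/
def IsBVBracketOf {X : Type*} [Ring X] [Algebra ℝ X]
    (𝒜 : ℤ → Submodule ℝ X) (D : X →ₗ[ℝ] X) (Br : X →ₗ[ℝ] X →ₗ[ℝ] X) : Prop :=
  ∀ (i j : ℤ) (f g : X), f ∈ 𝒜 i → g ∈ 𝒜 j →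
    Br f g = ((-1 : ℝ) ^ i) • (D (f * g) - D f * g - ((-1 : ℝ) ^ i) • (f * D g))

/-- A BV algebra structure on the ℤ-graded algebra `X` with grading `𝒜`:
graded commutativity, a BV Laplacian `Δ` and its associated BV bracket. -/
structure BVAlgebraStr (X : Type*) [Ring X] [Algebra ℝ X]
    (𝒜 : ℤ → Submodule ℝ X) where
  grcomm : GradedComm 𝒜
  Δ : X →ₗ[ℝ] X
  isBVLaplacian : IsBVLaplacian 𝒜 Δ
  bracket : X →ₗ[ℝ] X →ₗ[ℝ] X
  isBracket : IsBVBracketOf 𝒜 Δ bracket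

/-- The bracket `Br` is nonsingular: its center is exactly `ℝ·1`. -/
def IsNonsingularBracket {X : Type*} [Ring X] [Algebra ℝ X]
    (Br : X →ₗ[ℝ] X →ₗ[ℝ] X) : Prop :=
  ∀ c : X, (∀ f : X, Br f c = 0) ↔ ∃ r : ℝ, c = algebraMap ℝ X r

/-- `α` is a canonical map with logarithmic Jacobian `r`: a degree-preserving
isomorphism of unital algebras with `Δ_Y(αf) - α(Δ_X f) + (r, αf)_Y = 0`,
where `r` has degree `0`. -/
def IsCanonicalWithJacobian {X Y : Type*} [Ring X] [Algebra ℝ X] [Ring Y] [Algebra ℝ Y]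
    (𝒜 : ℤ → Submodule ℝ X) (ℬ : ℤ → Submodule ℝ Y)
    (ΔX : X →ₗ[ℝ] X) (ΔY : Y →ₗ[ℝ] Y) (BrY : Y →ₗ[ℝ] Y →ₗ[ℝ] Y)
    (α : X ≃ₐ[ℝ] Y) (r : Y) : Prop :=
  (∀ (i : ℤ) (f : X), f ∈ 𝒜 i → α f ∈ ℬ i) ∧ r ∈ ℬ 0 ∧
  (∀ f : X, ΔY (α f) - α (ΔX f) + BrY r (α f) = 0)

/-- `ξ` is an infinitesimal canonical map with logarithmic Jacobian `e`:
a degree-`0` derivation with `Δ(ξf) - ξ(Δf) + (e, f) = 0`, `e` of degree `0`. -/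
def IsInfCanonicalWithJacobian {X : Type*} [Ring X] [Algebra ℝ X]
    {𝒜 : ℤ → Submodule ℝ X} (B : BVAlgebraStr X 𝒜)
    (ξ : X →ₗ[ℝ] X) (e : X) : Prop :=
  (∀ (i : ℤ) (f : X), f ∈ 𝒜 i → ξ f ∈ 𝒜 i) ∧
  (∀ f g : X, ξ (f * g) = ξ f * g + f * ξ g) ∧
  e ∈ 𝒜 0 ∧
  (∀ f : X, B.Δ (ξ f) - ξ (B.Δ f) + B.bracket e f = 0)

/-- `S` is a BV quantum master action: a degree-`0` element satisfying the
quantum master equation `ΔS + (1/2)(S,S) = 0`. -/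
def IsMasterAction {X : Type*} [Ring X] [Algebra ℝ X]
    {𝒜 : ℤ → Submodule ℝ X} (B : BVAlgebraStr X 𝒜) (S : X) : Prop :=
  S ∈ 𝒜 0 ∧ B.Δ S + (1 / 2 : ℝ) • B.bracket S S = 0

/-! For `a` of degree `0`, the seven-term identity together with graded commutativity shows that
`(a, -)` is an odd derivation. The bracket of a Laplacian measures how far it is from being a
derivation, so adding `(a, -)` to `Δ₀` leaves the bracket unchanged, while conjugating a Laplacian
by a graded algebra automorphism conjugates its bracket. Since a bracket is determined by its
values on homogeneous elements, this identifies every bracket of the twisted Laplacians. -/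

open DirectSum

theorem AlgEquiv.symm_mem_of_map_mem_graded {ι R A : Type*} [DecidableEq ι] [AddMonoid ι]
    [CommSemiring R] [Semiring A] [Algebra R A] (𝒜 : ι → Submodule R A) [GradedAlgebra 𝒜]
    (α : A ≃ₐ[R] A) (hα : ∀ i x, x ∈ 𝒜 i → α x ∈ 𝒜 i) {i : ι} {x : A} (hx : x ∈ 𝒜 i) :
    α.symm x ∈ 𝒜 i := by
  let φ : 𝒜 →+*ᵍ 𝒜 := { toRingHom := α.toRingHom, map_mem := hα _ _ }
  have hcomp : α (decompose 𝒜 (α.symm x) i) = x := by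
    have h := φ.map_directSumDecompose 𝒜 𝒜 (x := α.symm x) (i := i)
    rwa [show φ (α.symm x) = x from α.apply_symm_apply x, decompose_of_mem_same 𝒜 hx] at h
  rw [← hcomp, α.symm_apply_apply]
  exact SetLike.coe_mem _

theorem DirectSum.decompose_linearMap₂_ext {ι R M N : Type*} [DecidableEq ι] [CommSemiring R]
    [AddCommMonoid M] [Module R M] [AddCommMonoid N] [Module R N]
    (ℳ : ι → Submodule R M) [Decomposition ℳ] {T S : M →ₗ[R] M →ₗ[R] N}
    (h : ∀ i j x y, x ∈ ℳ i → y ∈ ℳ j → T x y = S x y) : T = S :=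
  decompose_lhom_ext ℳ fun i => LinearMap.ext fun x =>
    decompose_lhom_ext ℳ fun j => LinearMap.ext fun y => h i j x y x.2 y.2

namespace BVAlgebraStr

variable {X : Type*} [Ring X] [Algebra ℝ X] {𝒜 : ℤ → Submodule ℝ X} [SetLike.GradedMul 𝒜]
  (B : BVAlgebraStr X 𝒜) {a : X}

theorem bracket_mul_of_mem_zero (ha : a ∈ 𝒜 0) {j k : ℤ} {f g : X} (hf : f ∈ 𝒜 j)
    (hg : g ∈ 𝒜 k) :
    B.bracket a (f * g) = B.bracket a f * g + ((-1 : ℝ) ^ j) • (f * B.bracket a g) := by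
  obtain ⟨hdeg, hseven, -, -⟩ := B.isBVLaplacian
  have hΔa : B.Δ a ∈ 𝒜 1 := by simpa using hdeg 0 a ha
  have hfΔa : f * B.Δ a = ((-1 : ℝ) ^ j) • (B.Δ a * f) := by
    simpa using B.grcomm j 1 f (B.Δ a) hf hΔa
  have hfa : f * a = a * f := by simpa using B.grcomm j 0 f a hf ha
  have hsign : (-1 : ℝ) ^ j * (-1 : ℝ) ^ j = 1 := by
    rw [← mul_zpow]; norm_num
  have h7 := hseven 0 j k a f g ha hf hg
  simp only [zpow_zero, one_smul, zero_add, one_mul] at h7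
  simp only [B.isBracket 0 _ a _ ha (SetLike.mul_mem_graded hf hg), B.isBracket 0 _ a _ ha hf,
    B.isBracket 0 _ a _ ha hg, zpow_zero, one_smul, ← mul_assoc, h7]
  simp only [sub_mul, mul_sub, ← mul_assoc, hfa, hfΔa, smul_mul_assoc]
  linear_combination (norm := module) hsign • (B.Δ a * f * g)

theorem isBVBracketOf_add_bracket (ha : a ∈ 𝒜 0) :
    IsBVBracketOf 𝒜 (B.Δ + B.bracket a) B.bracket := by
  intro i j f g hf hg
  simp only [LinearMap.add_apply, B.bracket_mul_of_mem_zero ha hf hg, B.isBracket i j f g hf hg,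
    add_mul, mul_add]
  module

end BVAlgebraStr

section Bracket

variable {X : Type*} [Ring X] [Algebra ℝ X] {𝒜 : ℤ → Submodule ℝ X} {D : X →ₗ[ℝ] X}
  {Br : X →ₗ[ℝ] X →ₗ[ℝ] X}

theorem IsBVBracketOf.unique [Decomposition 𝒜] {Br' : X →ₗ[ℝ] X →ₗ[ℝ] X}
    (h : IsBVBracketOf 𝒜 D Br) (h' : IsBVBracketOf 𝒜 D Br') : Br = Br' :=
  decompose_linearMap₂_ext 𝒜 fun i j f g hf hg => by rw [h i j f g hf hg, h' i j f g hf hg]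

theorem IsBVBracketOf.conj (h : IsBVBracketOf 𝒜 D Br) (α : X ≃ₐ[ℝ] X)
    (hα : ∀ i f, f ∈ 𝒜 i → α.symm f ∈ 𝒜 i) :
    IsBVBracketOf 𝒜 (α.toLinearMap ∘ₗ D ∘ₗ α.symm.toLinearMap)
      ((Br.compl₁₂ α.symm.toLinearMap α.symm.toLinearMap).compr₂ α.toLinearMap) := by
  intro i j f g hf hg
  simp only [LinearMap.compr₂_apply, LinearMap.compl₁₂_apply, LinearMap.comp_apply,
    AlgEquiv.toLinearMap_apply, h i j _ _ (hα i f hf) (hα j g hg)]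
  simp only [map_smul, map_sub, map_mul, AlgEquiv.apply_symm_apply]

end Bracket

theorem stmt12_general {X : Type*} [Ring X] [Algebra ℝ X]
    (𝒜 : ℤ → Submodule ℝ X) [GradedAlgebra 𝒜] (B : BVAlgebraStr X 𝒜)
    (a : X) (ha : a ∈ 𝒜 0)
    (α : X ≃ₐ[ℝ] X) (hdeg : ∀ (i : ℤ) (f : X), f ∈ 𝒜 i → α f ∈ 𝒜 i) :
    (∀ Br : X →ₗ[ℝ] X →ₗ[ℝ] X,
      IsBVBracketOf 𝒜
        (α.toLinearMap.comp ((B.Δ + B.bracket a).comp α.symm.toLinearMap)) Br →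
      ∀ f g : X, Br f g = α (B.bracket (α.symm f) (α.symm g))) ∧
    (∀ Br : X →ₗ[ℝ] X →ₗ[ℝ] X,
      IsBVBracketOf 𝒜 (B.Δ + B.bracket a) Br → Br = B.bracket) := by
  have htwist := B.isBVBracketOf_add_bracket ha
  refine ⟨fun Br hBr f g => ?_, fun Br hBr => hBr.unique htwist⟩
  have hconj := htwist.conj α fun i f hf => α.symm_mem_of_map_mem_graded 𝒜 hdeg hf
  rw [hBr.unique hconj]
  rfl

/-- the BV bracket of the conjugated twisted Laplacian
`Δ_{αa} = α ∘ (Δ₀ + (a,-)₀) ∘ α⁻¹` is the conjugate of `(-,-)₀`; in particular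
the bracket of `Δ₀ + (a,-)₀` is `(-,-)₀` itself. -/
theorem stmt12 {X : Type*} [Ring X] [Algebra ℝ X]
    (𝒜 : ℤ → Submodule ℝ X) [GradedAlgebra 𝒜] (B : BVAlgebraStr X 𝒜)
    (a : X) (ha : a ∈ 𝒜 0)
    (hma : B.Δ a + (1 / 2 : ℝ) • B.bracket a a = 0)
    (α : X ≃ₐ[ℝ] X) (hdeg : ∀ (i : ℤ) (f : X), f ∈ 𝒜 i → α f ∈ 𝒜 i) :
    (∀ Br : X →ₗ[ℝ] X →ₗ[ℝ] X,
      IsBVBracketOf 𝒜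
        (α.toLinearMap.comp ((B.Δ + B.bracket a).comp α.symm.toLinearMap)) Br →
      ∀ f g : X, Br f g = α (B.bracket (α.symm f) (α.symm g))) ∧
    (∀ Br : X →ₗ[ℝ] X →ₗ[ℝ] X,
      IsBVBracketOf 𝒜 (B.Δ + B.bracket a) Br → Br = B.bracket) :=
  stmt12_general 𝒜 B a ha α hdeg
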